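/- Let A be a Banach algebra, φ ∈ Δ(A), and M ∈ (A⊗̂A)** with a·M = M·a for all a ∈ A and φ̃(π_A**(M)) = 1. Then there exists a bounded net (n_α) in A⊗̂A with ‖n_α‖ ≤ ‖M‖, a·n_α − n_α·a → 0 in norm for each a ∈ A, and φ(π_A(n_α)) → 1. -/

import Mathlib

set_option synthInstance.maxHeartbeats 1000000
set_option maxHeartbeats 1000000

open ContinuousLinearMap Filter Topology MeasureTheory

/-- Data realizing the projective tensor product `B ⊗̂ B` of a Banach-algebra-like space `B`
(with multiplication `mul`) as a Banach `B`-bimodule `X`: `tp a b` is the elementary tensor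
`a ⊗ b`, `lsmul a x = a · x`, `rsmul a x = x · a`, and `pi` is the product morphism `π`. -/
structure PTD (B : Type) [NormedAddCommGroup B] [NormedSpace ℂ B]
    (X : Type) [NormedAddCommGroup X] [NormedSpace ℂ X]
    (mul : B → B → B) where
  tp : B →L[ℂ] B →L[ℂ] X
  lsmul : B →L[ℂ] X →L[ℂ] X
  rsmul : B →L[ℂ] X →L[ℂ] X
  pi : X →L[ℂ] B
  lsmul_tp : ∀ a b c, lsmul a (tp b c) = tp (mul a b) c
  rsmul_tp : ∀ a b c, rsmul a (tp b c) = tp b (mul c a)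
  pi_tp : ∀ a b, pi (tp a b) = mul a b
  norm_tp : ∀ a b, ‖tp a b‖ ≤ ‖a‖ * ‖b‖
  dense_span : Dense (↑(Submodule.span ℂ (Set.range fun p : B × B => tp p.1 p.2)) : Set X)
  lift : ∀ (Y : Type) [NormedAddCommGroup Y] [NormedSpace ℂ Y] [CompleteSpace Y]
      (b : B →L[ℂ] B →L[ℂ] Y), ∃ T : X →L[ℂ] Y, ∀ a c, T (tp a c) = b a c

/-- The double adjoint (bitranspose) `T** : E** → F**` of a continuous linear map `T : E → F`;
explicitly, `dual2 T M g = M (g ∘ T)`. -/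
noncomputable def dual2 {E F : Type} [NormedAddCommGroup E] [NormedSpace ℂ E]
    [NormedAddCommGroup F] [NormedSpace ℂ F] (T : E →L[ℂ] F) :
    ((E →L[ℂ] ℂ) →L[ℂ] ℂ) →L[ℂ] ((F →L[ℂ] ℂ) →L[ℂ] ℂ) :=
  (ContinuousLinearMap.compL ℂ (F →L[ℂ] ℂ) (E →L[ℂ] ℂ) ℂ).flip
    ((ContinuousLinearMap.compL ℂ E F ℂ).flip T)

/-!
Goldstine's theorem combined with Mazur's lemma: if `T** M` is the image of a vector `y`, then
`y` lies in the norm closure of `T(ball(0, ‖M‖))`, since a functional `g` strictly separating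
`y` from that convex set would give `Re g(y) ≤ |M(g ∘ T)| ≤ ‖M‖ ‖g ∘ T‖ < Re g(y)`.
With `T n = ((a · n - n · a)_{a ∈ F}, φ(π n))` for a finite `F ⊆ A`, centrality of `M` and
`φ̃(π** M) = 1` say exactly that `T** M` is the image of `(0, 1)`. The approximants obtained for
each finite `F` and tolerance form the net.
-/

open Metric

theorem dual2_apply {E F : Type} [NormedAddCommGroup E] [NormedSpace ℂ E]
    [NormedAddCommGroup F] [NormedSpace ℂ F] (T : E →L[ℂ] F)
    (M : (E →L[ℂ] ℂ) →L[ℂ] ℂ) (g : F →L[ℂ] ℂ) :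
    dual2 T M g = M (g.comp T) := rfl

section

variable {𝕜 X Y : Type*} [RCLike 𝕜] [NormedAddCommGroup X] [NormedSpace 𝕜 X]
  [NormedAddCommGroup Y] [NormedSpace 𝕜 Y]

theorem apply_comp_pi_eq_zero {ι : Type*} [Fintype ι] [DecidableEq ι] (D : ι → X →L[𝕜] Y)
    (M : StrongDual 𝕜 (StrongDual 𝕜 X)) (hD : ∀ i, ∀ g : StrongDual 𝕜 Y, M (g.comp (D i)) = 0)
    (g : StrongDual 𝕜 (ι → Y)) :
    M (g.comp (pi D)) = 0 := by
  have hg : g.comp (pi D) = ∑ i, (g.comp (single 𝕜 (fun _ => Y) i)).comp (D i) := by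
    ext x
    simp [← map_sum, Finset.univ_sum_single]
  simp [hg, hD]

variable [NormedSpace ℝ X] [IsScalarTower ℝ 𝕜 X] [NormedSpace ℝ Y] [IsScalarTower ℝ 𝕜 Y]

theorem mem_closure_image_closedBall_of_apply_comp_eq (T : X →L[𝕜] Y)
    (M : StrongDual 𝕜 (StrongDual 𝕜 X)) (y : Y)
    (hM : ∀ g : StrongDual 𝕜 Y, M (g.comp T) = g y) :
    y ∈ closure (T '' closedBall 0 ‖M‖) := by
  by_contra hy
  have hconv : Convex ℝ (closure (T '' closedBall 0 ‖M‖)) :=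
    ((convex_closedBall 0 ‖M‖).linear_image (T.restrictScalars ℝ).toLinearMap).closure
  obtain ⟨g, u, hgK, hgy⟩ :=
    RCLike.geometric_hahn_banach_closed_point (𝕜 := 𝕜) hconv isClosed_closure hy
  have hball : ∀ x ∈ closedBall (0 : X) ‖M‖, ‖g.comp T x‖ ≤ u := by
    intro x hx
    obtain ⟨c, hc, hcx⟩ := RCLike.exists_norm_eq_mul_self (g (T x))
    have hcx_mem : c • x ∈ closedBall (0 : X) ‖M‖ := by
      rwa [mem_closedBall_zero_iff, norm_smul, hc, one_mul, ← mem_closedBall_zero_iff]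
    have hlt := hgK _ (subset_closure ⟨c • x, hcx_mem, rfl⟩)
    rw [map_smul, map_smul, smul_eq_mul, ← hcx, RCLike.ofReal_re] at hlt
    exact hlt.le
  have hgT : ‖M‖ * ‖g.comp T‖ ≤ u := by
    rcases (norm_nonneg M).eq_or_lt with hM0 | hMpos
    · simpa [← hM0] using hball 0 (by simp [← hM0])
    · calc ‖M‖ * ‖g.comp T‖ ≤ ‖M‖ * (u / ‖M‖) := by
            gcongr; exact opNorm_bound_of_ball_bound hMpos u _ hball
        _ = u := mul_div_cancel₀ u hMpos.ne'
  have hgy_le : RCLike.re (g y) ≤ u := calc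
    RCLike.re (g y) ≤ ‖g y‖ := RCLike.re_le_norm _
    _ = ‖M (g.comp T)‖ := by rw [hM]
    _ ≤ ‖M‖ * ‖g.comp T‖ := M.le_opNorm _
    _ ≤ u := hgT
  linarith

theorem zero_one_mem_closure_image_closedBall_prod (D : X →L[𝕜] Y) (ψ : StrongDual 𝕜 X)
    (M : StrongDual 𝕜 (StrongDual 𝕜 X)) (hD : ∀ g : StrongDual 𝕜 Y, M (g.comp D) = 0)
    (hψ : M ψ = 1) :
    ((0 : Y), (1 : 𝕜)) ∈ closure (D.prod ψ '' closedBall 0 ‖M‖) := by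
  refine mem_closure_image_closedBall_of_apply_comp_eq _ M _ fun g => ?_
  have hg : g.comp (D.prod ψ) = (g.comp (inl 𝕜 Y 𝕜)).comp D + g (0, 1) • ψ := by
    ext x
    have hx : (D x, ψ x) = (D x, 0) + ψ x • ((0 : Y), (1 : 𝕜)) := by simp
    rw [comp_apply, prod_apply, hx, map_add, map_smul]
    simp [mul_comm]
  rw [hg, map_add, hD, map_smul, hψ, zero_add, smul_eq_mul, mul_one]

theorem exists_norm_le_norm_lt_of_apply_comp_eq_zero {ι : Type*} [Fintype ι]
    (D : ι → X →L[𝕜] Y) (ψ : StrongDual 𝕜 X) (M : StrongDual 𝕜 (StrongDual 𝕜 X))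
    (hD : ∀ i, ∀ g : StrongDual 𝕜 Y, M (g.comp (D i)) = 0) (hψ : M ψ = 1)
    {ε : ℝ} (hε : 0 < ε) :
    ∃ x : X, ‖x‖ ≤ ‖M‖ ∧ (∀ i, ‖D i x‖ < ε) ∧ ‖ψ x - 1‖ < ε := by
  classical
  obtain ⟨_, ⟨x, hx, rfl⟩, hdist⟩ := Metric.mem_closure_iff.1
    (zero_one_mem_closure_image_closedBall_prod _ ψ M (apply_comp_pi_eq_zero D M hD) hψ) ε hε
  rw [Prod.dist_eq, max_lt_iff, dist_pi_lt_iff hε] at hdist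
  refine ⟨x, mem_closedBall_zero_iff.1 hx, fun i => ?_, ?_⟩
  · simpa [dist_eq_norm] using hdist.1 i
  · simpa [dist_eq_norm', ← norm_neg (ψ x - 1)] using hdist.2

end

theorem exists_bounded_approx_central_net_general
    (A : Type) [NonUnitalNormedRing A] [NormedSpace ℂ A]
    (φ : A →L[ℂ] ℂ)
    (X : Type) [NormedAddCommGroup X] [NormedSpace ℂ X]
    (td : PTD A X (fun a b => a * b))
    (M : (X →L[ℂ] ℂ) →L[ℂ] ℂ)
    (hM_central : ∀ a : A, dual2 (td.lsmul a) M = dual2 (td.rsmul a) M)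
    (hM_one : dual2 td.pi M φ = 1) :
    ∃ (ι : Type) (l : Filter ι), l.NeBot ∧ ∃ n : ι → X,
      (∀ i, ‖n i‖ ≤ ‖M‖) ∧
      (∀ a : A, Tendsto (fun i => td.lsmul a (n i) - td.rsmul a (n i)) l (𝓝 0)) ∧
      Tendsto (fun i => φ (td.pi (n i))) l (𝓝 1) := by
  classical
  have hM_comm (a : A) (g : X →L[ℂ] ℂ) : M (g.comp (td.lsmul a - td.rsmul a)) = 0 := by
    rw [comp_sub, map_sub, ← dual2_apply, ← dual2_apply, hM_central, sub_self]
  have approx (p : Finset A × ℕ) : ∃ n : X, ‖n‖ ≤ ‖M‖ ∧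
      (∀ a : p.1, ‖(td.lsmul a - td.rsmul a) n‖ < 1 / (p.2 + 1)) ∧
      ‖φ.comp td.pi n - 1‖ < 1 / (p.2 + 1) :=
    exists_norm_le_norm_lt_of_apply_comp_eq_zero (fun a : p.1 => td.lsmul a - td.rsmul a)
      (φ.comp td.pi) M (fun a => hM_comm a) hM_one (by positivity)
  choose n hn_norm hn_comm hn_one using approx
  have hε : Tendsto (fun p : Finset A × ℕ => 1 / ((p.2 : ℝ) + 1)) atTop (𝓝 0) :=
    tendsto_one_div_add_atTop_nhds_zero_nat.comp (tendsto_snd.mono_left prod_atTop_atTop_eq.ge)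
  refine ⟨Finset A × ℕ, atTop, atTop_neBot, n, hn_norm, fun a => ?_, ?_⟩
  · refine squeeze_zero_norm' ?_ hε
    filter_upwards [eventually_ge_atTop (({a}, 0) : Finset A × ℕ)] with p hp
    exact (hn_comm p ⟨a, Finset.singleton_subset_iff.1 hp.1⟩).le
  · rw [tendsto_iff_norm_sub_tendsto_zero]
    exact squeeze_zero (fun _ => norm_nonneg _) (fun p => (hn_one p).le) hε

/-- If `M ∈ (A ⊗̂ A)**` satisfies `a · M = M · a` for all `a ∈ A` and `φ̃(π**(M)) = 1`, then
there is a net `(n_α)` in `A ⊗̂ A` with `‖n_α‖ ≤ ‖M‖`, `a · n_α − n_α · a → 0` in norm for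
each `a ∈ A`, and `φ(π(n_α)) → 1`. -/
theorem exists_bounded_approx_central_net
    (A : Type) [NonUnitalNormedRing A] [NormedSpace ℂ A]
    [IsScalarTower ℂ A A] [SMulCommClass ℂ A A] [CompleteSpace A]
    (φ : A →L[ℂ] ℂ) (hφmul : ∀ a b : A, φ (a * b) = φ a * φ b) (hφne : φ ≠ 0)
    (X : Type) [NormedAddCommGroup X] [NormedSpace ℂ X] [CompleteSpace X]
    (td : PTD A X (fun a b => a * b))
    (M : (X →L[ℂ] ℂ) →L[ℂ] ℂ)
    (hM_central : ∀ a : A, dual2 (td.lsmul a) M = dual2 (td.rsmul a) M)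
    (hM_one : dual2 td.pi M φ = 1) :
    ∃ (ι : Type) (l : Filter ι), l.NeBot ∧ ∃ n : ι → X,
      (∀ i, ‖n i‖ ≤ ‖M‖) ∧
      (∀ a : A, Tendsto (fun i => td.lsmul a (n i) - td.rsmul a (n i)) l (𝓝 0)) ∧
      Tendsto (fun i => φ (td.pi (n i))) l (𝓝 1) :=
  exists_bounded_approx_central_net_general A φ X td M hM_central hM_one
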